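/- Let G be an abelian group with maximal torsion subgroup T (the subgroup of all elements of finite order), and suppose G splits, i.e., G ≅ T ⊕ (G/T). Then G is Bassian-finite if and only if both T and G/T are Bassian-finite. -/

import Mathlib

/-!
Both directions reduce to complementary pairs `A ⊕ B = G` together with an injective
endomorphism `f` of `G` with image in `A`; Bassian-finiteness says that `B` must vanish.

If `G ≅ T × Q` is Bassian-finite, such data on `T` (resp. `Q`) extends to `T × Q` by taking the
identity on the other factor. Conversely, the torsion subgroup of `A ⊕ B` is `t(A) ⊕ t(B)`, and
`f` restricts to an injection `t(G) → t(A)`, so `t(B) = 0` when `t(G)` is Bassian-finite.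
Then `B` embeds into `G/t(G) = Ā ⊕ B̄`, and the endomorphism of `G/t(G)` induced by `f` is
injective (injective maps reflect torsion) with image in `Ā`, so `B̄ = 0` forces `B = 0`.
-/

/-- An abelian group `G` is *Bassian-finite* if there is no injective homomorphism
from `G` into a proper direct summand of `G`. -/
def BassianFinite (G : Type*) [AddCommGroup G] : Prop :=
  ∀ A B : AddSubgroup G, IsCompl A B → B ≠ ⊥ → ∀ φ : G →+ A, ¬ Function.Injective φ

open AddCommGroup

section

variable {G H : Type*} [AddCommGroup G] [AddCommGroup H]

theorem bassianFinite_iff_eq_bot :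
    BassianFinite G ↔ ∀ A B : AddSubgroup G, IsCompl A B →
      ∀ f : G →+ G, Function.Injective f → (∀ x, f x ∈ A) → B = ⊥ := by
  constructor
  · intro h A B hAB f hf hfA
    by_contra hB
    exact h A B hAB hB (f.codRestrict A hfA) fun x y hxy => hf (congrArg Subtype.val hxy)
  · intro h A B hAB hB φ hφ
    exact hB (h A B hAB (A.subtype.comp φ) (Subtype.val_injective.comp hφ) fun x => (φ x).2)

theorem BassianFinite.of_addEquiv (e : G ≃+ H) (h : BassianFinite H) : BassianFinite G := by
  rw [bassianFinite_iff_eq_bot] at h ⊢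
  intro A B hAB f hf hfA
  have hB := h _ _ ((AddEquiv.mapAddSubgroup e).isCompl hAB)
    (e.toAddMonoidHom.comp (f.comp e.symm.toAddMonoidHom))
    (e.injective.comp (hf.comp e.symm.injective))
    fun x => AddSubgroup.mem_map_of_mem _ (hfA _)
  exact (AddSubgroup.map_eq_bot_iff_of_injective B e.injective).1 hB

theorem AddSubgroup.isCompl_prod {A B : AddSubgroup G} {C D : AddSubgroup H}
    (hAB : IsCompl A B) (hCD : IsCompl C D) : IsCompl (A.prod C) (B.prod D) := by
  constructor
  · rw [AddSubgroup.disjoint_def]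
    rintro ⟨x, y⟩ ⟨hxA, hyC⟩ ⟨hxB, hyD⟩
    exact Prod.ext (AddSubgroup.disjoint_def.1 hAB.disjoint hxA hxB)
      (AddSubgroup.disjoint_def.1 hCD.disjoint hyC hyD)
  · rw [codisjoint_iff_le_sup]
    rintro ⟨x, y⟩ -
    obtain ⟨a, ha, b, hb, rfl⟩ := AddSubgroup.mem_sup.1 (hAB.sup_eq_top ▸ AddSubgroup.mem_top x)
    obtain ⟨c, hc, d, hd, rfl⟩ := AddSubgroup.mem_sup.1 (hCD.sup_eq_top ▸ AddSubgroup.mem_top y)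
    exact AddSubgroup.mem_sup.2 ⟨(a, c), ⟨ha, hc⟩, (b, d), ⟨hb, hd⟩, rfl⟩

theorem BassianFinite.of_prod_left (h : BassianFinite (G × H)) : BassianFinite G := by
  rw [bassianFinite_iff_eq_bot] at h ⊢
  intro A B hAB f hf hfA
  have hB := h _ _ (AddSubgroup.isCompl_prod hAB (isCompl_top_bot (α := AddSubgroup H)))
    (f.prodMap (AddMonoidHom.id H)) (hf.prodMap Function.injective_id)
    fun x => ⟨hfA x.1, trivial⟩
  exact (AddSubgroup.prod_eq_bot_iff.1 hB).1

theorem BassianFinite.of_prod_right (h : BassianFinite (G × H)) : BassianFinite H :=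
  (h.of_addEquiv AddEquiv.prodComm).of_prod_left

theorem IsOfFinAddOrder.of_add_of_disjoint {A B : AddSubgroup G} (hAB : Disjoint A B)
    {a b : G} (ha : a ∈ A) (hb : b ∈ B) (h : IsOfFinAddOrder (a + b)) : IsOfFinAddOrder a := by
  obtain ⟨n, hn, hab⟩ := isOfFinAddOrder_iff_nsmul_eq_zero.1 h
  refine isOfFinAddOrder_iff_nsmul_eq_zero.2 ⟨n, hn, ?_⟩
  rw [nsmul_add, add_eq_zero_iff_eq_neg] at hab
  refine AddSubgroup.disjoint_def.1 hAB (A.nsmul_mem ha n) ?_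
  rw [hab]
  exact B.neg_mem (B.nsmul_mem hb n)

theorem IsCompl.comap_subtype_torsion {A B : AddSubgroup G} (hAB : IsCompl A B) :
    IsCompl (A.comap (torsion G).subtype) (B.comap (torsion G).subtype) := by
  constructor
  · rw [AddSubgroup.disjoint_def]
    intro x hxA hxB
    exact Subtype.ext (AddSubgroup.disjoint_def.1 hAB.disjoint hxA hxB)
  · rw [codisjoint_iff_le_sup]
    rintro ⟨x, hx⟩ -
    obtain ⟨a, ha, b, hb, rfl⟩ := AddSubgroup.mem_sup.1 (hAB.sup_eq_top ▸ AddSubgroup.mem_top x)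
    have ha' : a ∈ torsion G := hx.of_add_of_disjoint hAB.disjoint ha hb
    have hb' : b ∈ torsion G :=
      (add_comm a b ▸ hx).of_add_of_disjoint hAB.disjoint.symm hb ha
    exact AddSubgroup.mem_sup.2 ⟨⟨a, ha'⟩, ha, ⟨b, hb'⟩, hb, rfl⟩

theorem IsCompl.map_mk_torsion {A B : AddSubgroup G} (hAB : IsCompl A B) :
    IsCompl (A.map (QuotientAddGroup.mk' (torsion G)))
      (B.map (QuotientAddGroup.mk' (torsion G))) := by
  constructor
  · rw [AddSubgroup.disjoint_def]
    rintro _ ⟨a, ha, rfl⟩ ⟨b, hb, hba⟩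
    have hab : IsOfFinAddOrder (-a + b) := QuotientAddGroup.eq.1 hba.symm
    have hb' : b ∈ torsion G :=
      (add_comm (-a) b ▸ hab).of_add_of_disjoint hAB.disjoint.symm hb (A.neg_mem ha)
    rw [← hba]
    exact (QuotientAddGroup.eq_zero_iff b).2 hb'
  · rw [codisjoint_iff, ← AddSubgroup.map_sup, hAB.sup_eq_top,
      AddSubgroup.map_top_of_surjective _ (QuotientAddGroup.mk'_surjective _)]

theorem disjoint_torsion_of_bassianFinite (hT : BassianFinite (torsion G))
    {A B : AddSubgroup G} (hAB : IsCompl A B) {f : G →+ G} (hf : Function.Injective f)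
    (hfA : ∀ x, f x ∈ A) : Disjoint B (torsion G) := by
  let g : torsion G →+ torsion G :=
    (f.comp (torsion G).subtype).codRestrict (torsion G) fun x => le_comap_torsion f x.2
  have hg : Function.Injective g := fun x y hxy => Subtype.ext (hf (congrArg Subtype.val hxy))
  have hB := bassianFinite_iff_eq_bot.1 hT _ _ hAB.comap_subtype_torsion g hg fun x => hfA x
  rw [AddSubgroup.disjoint_def]
  intro x hxB hxT
  simpa using congrArg Subtype.val (AddSubgroup.mem_bot.1 (hB ▸ hxB : ⟨x, hxT⟩ ∈ _))

theorem BassianFinite.of_torsion_of_quotient (hT : BassianFinite (torsion G))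
    (hQ : BassianFinite (G ⧸ torsion G)) : BassianFinite G := by
  rw [bassianFinite_iff_eq_bot]
  intro A B hAB f hf hfA
  have hBT : Disjoint B (torsion G) := disjoint_torsion_of_bassianFinite hT hAB hf hfA
  let g : G ⧸ torsion G →+ G ⧸ torsion G :=
    QuotientAddGroup.map _ _ f (le_comap_torsion f)
  have hg : Function.Injective g := by
    rw [← AddMonoidHom.ker_eq_bot_iff, QuotientAddGroup.ker_map, comap_torsion_of_injective hf,
      AddSubgroup.map_eq_bot_iff, QuotientAddGroup.ker_mk']
  have hgA : ∀ x, g x ∈ A.map (QuotientAddGroup.mk' (torsion G)) := fun x =>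
    QuotientAddGroup.induction_on x fun y => AddSubgroup.mem_map_of_mem _ (hfA y)
  have hB := bassianFinite_iff_eq_bot.1 hQ _ _ hAB.map_mk_torsion g hg hgA
  rw [AddSubgroup.map_eq_bot_iff, QuotientAddGroup.ker_mk'] at hB
  exact hBT.eq_bot_of_le hB

end

/-- If `G` splits over its maximal torsion subgroup `T`, i.e. `G ≅ T ⊕ (G/T)`, then
`G` is Bassian-finite if and only if both `T` and `G/T` are Bassian-finite. -/
theorem bassianFinite_iff_of_splits (G : Type*) [AddCommGroup G]
    (hsplit : Nonempty
      (G ≃+ (AddCommGroup.torsion G × (G ⧸ AddCommGroup.torsion G)))) :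
    BassianFinite G ↔
      BassianFinite (AddCommGroup.torsion G) ∧
        BassianFinite (G ⧸ AddCommGroup.torsion G) := by
  obtain ⟨e⟩ := hsplit
  refine ⟨fun hG => ?_, fun ⟨hT, hQ⟩ => .of_torsion_of_quotient hT hQ⟩
  have hP := hG.of_addEquiv e.symm
  exact ⟨hP.of_prod_left, hP.of_prod_right⟩
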